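/- Let V and W be unitary n×n complex matrices and R an n×n complex matrix with conj R = R and Rᵀ = R (R real symmetric, e.g. a real diagonal matrix of squeezing eigenvalues). Set M = fromBlocks V 0 0 (conj V), Q = fromBlocks W 0 0 (conj W), and S = M · exp(fromBlocks 0 R R 0) · Qᴴ. Then S·Sᴴ = fromBlocks (V·cosh(2R)·Vᴴ) (V·sinh(2R)·Vᵀ) ((conj V)·sinh(2R)·Vᴴ) ((conj V)·cosh(2R)·Vᵀ), where cosh(2R) = (exp(2R) + exp(−2R))/2 and sinh(2R) = (exp(2R) − exp(−2R))/2. Consequently, the covariance matrix (1/2)·S·Sᴴ of the output of unseeded parametric downconversion has phase-insensitive block Σ'₀ = (1/2)·V·cosh(2R)·Vᴴ and phase-sensitive block Σ'_I = (1/2)·V·sinh(2R)·Vᵀ. -/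

import Mathlib

/-!
Because `Q` is unitary and `K = fromBlocks 0 R R 0` is Hermitian,
`S * Sᴴ = M * exp K * exp K * Mᴴ = M * exp (2 • K) * Mᴴ`. Conjugation by `fromBlocks 1 1 1 (-1)`
turns `fromBlocks 0 B B 0` into `fromBlocks B 0 0 (-B)`, so `exp (fromBlocks 0 B B 0)` carries
`cosh B` on its diagonal blocks and `sinh B` off the diagonal; multiplying out the blocks against
`M` gives the covariance.
-/

open Matrix

namespace Matrix

variable {m n : Type*} [Fintype n] [DecidableEq n]

theorem fromBlocks_mem_unitaryGroup [Fintype m] [DecidableEq m] {α : Type*} [CommRing α]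
    [StarRing α] {A : Matrix m m α} {D : Matrix n n α}
    (hA : A ∈ unitaryGroup m α) (hD : D ∈ unitaryGroup n α) :
    fromBlocks A 0 0 D ∈ unitaryGroup (m ⊕ n) α := by
  rw [mem_unitaryGroup_iff'] at hA hD ⊢
  rw [star_eq_conjTranspose, fromBlocks_conjTranspose, fromBlocks_multiply]
  simp [← star_eq_conjTranspose, hA, hD]

theorem exp_fromBlocks_zero_zero [Fintype m] [DecidableEq m] {𝔸 : Type*} [NormedRing 𝔸]
    [NormedAlgebra ℚ 𝔸] [CompleteSpace 𝔸] (A : Matrix m m 𝔸) (D : Matrix n n 𝔸) :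
    NormedSpace.exp (fromBlocks A 0 0 D) =
      fromBlocks (NormedSpace.exp A) 0 0 (NormedSpace.exp D) := by
  let blockDiag : Matrix m m 𝔸 × Matrix n n 𝔸 →+* Matrix (m ⊕ n) (m ⊕ n) 𝔸 :=
    { toFun := fun p => fromBlocks p.1 0 0 p.2
      map_one' := fromBlocks_one
      map_mul' := fun p q => by simp [fromBlocks_multiply]
      map_zero' := fromBlocks_zero
      map_add' := fun p q => by simp [fromBlocks_add] }
  have hcont : Continuous blockDiag :=
    continuous_fst.matrix_fromBlocks continuous_const continuous_const continuous_snd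
  -- Instance search does not identify the operator-norm uniformity with the product one,
  -- so the completeness instances are supplied by hand.
  open scoped Norms.Operator in
  · have hm : CompleteSpace (Matrix m m 𝔸) := instCompleteSpace _ _ _
    have hn : CompleteSpace (Matrix n n 𝔸) := instCompleteSpace _ _ _
    have h := @NormedSpace.map_exp _ _ _ _ (@CompleteSpace.prod _ _ _ _ hm hn) _ _ _ _ _
      blockDiag hcont (A, D)
    simp only [blockDiag, RingHom.coe_mk, MonoidHom.coe_mk, OneHom.coe_mk] at h
    rw [@Prod.fst_exp _ _ _ _ hm _ _ hn, @Prod.snd_exp _ _ _ _ hm _ _ hn] at h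
    exact h.symm

variable {𝕜 : Type*} [RCLike 𝕜]

theorem exp_fromBlocks_zero_self_self_zero (B : Matrix n n 𝕜) :
    NormedSpace.exp (fromBlocks 0 B B 0) =
      fromBlocks ((2 : 𝕜)⁻¹ • (NormedSpace.exp B + NormedSpace.exp (-B)))
        ((2 : 𝕜)⁻¹ • (NormedSpace.exp B - NormedSpace.exp (-B)))
        ((2 : 𝕜)⁻¹ • (NormedSpace.exp B - NormedSpace.exp (-B)))
        ((2 : 𝕜)⁻¹ • (NormedSpace.exp B + NormedSpace.exp (-B))) := by
  set U : Matrix (n ⊕ n) (n ⊕ n) 𝕜 := fromBlocks 1 1 1 (-1)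
  have hU_left_inv : (2 : 𝕜)⁻¹ • U * U = 1 := by
    simp only [U, fromBlocks_multiply, fromBlocks_smul, Matrix.mul_one,
      Matrix.mul_neg, ← fromBlocks_one]
    congr 1 <;> module
  have hU : IsUnit U := (isUnit_iff_isUnit_det U).mpr (isUnit_det_of_left_inverse hU_left_inv)
  have hU_inv : U⁻¹ = (2 : 𝕜)⁻¹ • U := inv_eq_left_inv hU_left_inv
  have hconj : fromBlocks 0 B B 0 = U * fromBlocks B 0 0 (-B) * U⁻¹ := by
    simp only [hU_inv, U, Matrix.mul_smul, fromBlocks_multiply, fromBlocks_smul, Matrix.one_mul,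
      Matrix.mul_one, Matrix.mul_zero, Matrix.neg_mul, Matrix.mul_neg]
    congr 1 <;> module
  rw [hconj, exp_conj _ _ hU, exp_fromBlocks_zero_zero, hU_inv]
  simp only [U, Matrix.mul_smul, fromBlocks_multiply, fromBlocks_smul, Matrix.one_mul,
    Matrix.mul_one, Matrix.mul_zero, Matrix.neg_mul, Matrix.mul_neg]
  congr 1 <;> module

theorem mul_conjTranspose_self_of_eq_mul_exp_mul {S M : Matrix m n 𝕜} {X Q : Matrix n n 𝕜}
    (hX : X.IsHermitian) (hQ : Q ∈ unitaryGroup n 𝕜) (hS : S = M * NormedSpace.exp X * Qᴴ) :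
    S * Sᴴ = M * NormedSpace.exp (2 • X) * Mᴴ := by
  rw [hS, exp_nsmul, sq, conjTranspose_mul, conjTranspose_mul, conjTranspose_conjTranspose,
    ← exp_conjTranspose, hX.eq]
  simp only [Matrix.mul_assoc]
  rw [← Matrix.mul_assoc Qᴴ Q, ← star_eq_conjTranspose, mem_unitaryGroup_iff'.mp hQ,
    Matrix.one_mul]

end Matrix

theorem pdc_output_covariance_general (n : ℕ)
    (V W : Matrix (Fin n) (Fin n) ℂ)
    (hW : W ∈ Matrix.unitaryGroup (Fin n) ℂ)
    (R : Matrix (Fin n) (Fin n) ℂ)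
    (hRc : R.map (starRingEnd ℂ) = R) (hRs : Rᵀ = R)
    (M Q S : Matrix (Fin n ⊕ Fin n) (Fin n ⊕ Fin n) ℂ)
    (hM : M = Matrix.fromBlocks V 0 0 (V.map (starRingEnd ℂ)))
    (hQ : Q = Matrix.fromBlocks W 0 0 (W.map (starRingEnd ℂ)))
    (hS : S = M * NormedSpace.exp (Matrix.fromBlocks 0 R R 0) * Qᴴ)
    (coshTwoR sinhTwoR : Matrix (Fin n) (Fin n) ℂ)
    (hcosh : coshTwoR = ((2 : ℂ)⁻¹) •
      (NormedSpace.exp (2 • R) + NormedSpace.exp (-(2 • R))))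
    (hsinh : sinhTwoR = ((2 : ℂ)⁻¹) •
      (NormedSpace.exp (2 • R) - NormedSpace.exp (-(2 • R)))) :
    S * Sᴴ = Matrix.fromBlocks
        (V * coshTwoR * Vᴴ) (V * sinhTwoR * Vᵀ)
        ((V.map (starRingEnd ℂ)) * sinhTwoR * Vᴴ)
        ((V.map (starRingEnd ℂ)) * coshTwoR * Vᵀ) ∧
    (((1 : ℂ) / 2) • (S * Sᴴ)).toBlocks₁₁ = ((1 : ℂ) / 2) • (V * coshTwoR * Vᴴ) ∧
    (((1 : ℂ) / 2) • (S * Sᴴ)).toBlocks₁₂ = ((1 : ℂ) / 2) • (V * sinhTwoR * Vᵀ) := by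
  have hR : R.IsHermitian := by rw [IsHermitian, conjTranspose, hRs]; exact hRc
  have hQ_unitary : Q ∈ unitaryGroup (Fin n ⊕ Fin n) ℂ := by
    rw [hQ]
    exact fromBlocks_mem_unitaryGroup hW (map_star_mem_unitaryGroup_iff.mpr hW)
  have hSS : S * Sᴴ = fromBlocks (V * coshTwoR * Vᴴ) (V * sinhTwoR * Vᵀ)
      (V.map (starRingEnd ℂ) * sinhTwoR * Vᴴ) (V.map (starRingEnd ℂ) * coshTwoR * Vᵀ) := by
    have hK : (fromBlocks 0 R R 0).IsHermitian := isHermitian_zero.fromBlocks hR.eq isHermitian_zero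
    have hV_bar : (V.map (starRingEnd ℂ))ᴴ = Vᵀ := by ext; simp
    calc S * Sᴴ = M * NormedSpace.exp (2 • fromBlocks 0 R R 0) * Mᴴ :=
          mul_conjTranspose_self_of_eq_mul_exp_mul hK hQ_unitary hS
      _ = M * fromBlocks coshTwoR sinhTwoR sinhTwoR coshTwoR * Mᴴ := by
          rw [fromBlocks_smul, smul_zero, exp_fromBlocks_zero_self_self_zero, hcosh, hsinh]
      _ = _ := by
          simp [hM, fromBlocks_conjTranspose, fromBlocks_multiply, hV_bar, Matrix.mul_assoc]
  refine ⟨hSS, ?_, ?_⟩ <;> rw [hSS, fromBlocks_smul] <;> rfl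

/-- Covariance matrix of unseeded PDC output: for `S = M·exp(fromBlocks 0 R R 0)·Qᴴ` in
Bloch-Messiah form with `V`, `W` unitary and `R` real symmetric,
`S·Sᴴ = fromBlocks (V·cosh(2R)·Vᴴ) (V·sinh(2R)·Vᵀ) ((conj V)·sinh(2R)·Vᴴ) ((conj V)·cosh(2R)·Vᵀ)`;
consequently the covariance `(1/2)·S·Sᴴ` has phase-insensitive block `(1/2)·V·cosh(2R)·Vᴴ` and
phase-sensitive block `(1/2)·V·sinh(2R)·Vᵀ`. -/
theorem pdc_output_covariance (n : ℕ)
    (V W : Matrix (Fin n) (Fin n) ℂ)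
    (hV : V ∈ Matrix.unitaryGroup (Fin n) ℂ)
    (hW : W ∈ Matrix.unitaryGroup (Fin n) ℂ)
    (R : Matrix (Fin n) (Fin n) ℂ)
    (hRc : R.map (starRingEnd ℂ) = R) (hRs : Rᵀ = R)
    (M Q S : Matrix (Fin n ⊕ Fin n) (Fin n ⊕ Fin n) ℂ)
    (hM : M = Matrix.fromBlocks V 0 0 (V.map (starRingEnd ℂ)))
    (hQ : Q = Matrix.fromBlocks W 0 0 (W.map (starRingEnd ℂ)))
    (hS : S = M * NormedSpace.exp (Matrix.fromBlocks 0 R R 0) * Qᴴ)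
    (coshTwoR sinhTwoR : Matrix (Fin n) (Fin n) ℂ)
    (hcosh : coshTwoR = ((2 : ℂ)⁻¹) •
      (NormedSpace.exp (2 • R) + NormedSpace.exp (-(2 • R))))
    (hsinh : sinhTwoR = ((2 : ℂ)⁻¹) •
      (NormedSpace.exp (2 • R) - NormedSpace.exp (-(2 • R)))) :
    S * Sᴴ = Matrix.fromBlocks
        (V * coshTwoR * Vᴴ) (V * sinhTwoR * Vᵀ)
        ((V.map (starRingEnd ℂ)) * sinhTwoR * Vᴴ)
        ((V.map (starRingEnd ℂ)) * coshTwoR * Vᵀ) ∧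
    (((1 : ℂ) / 2) • (S * Sᴴ)).toBlocks₁₁ = ((1 : ℂ) / 2) • (V * coshTwoR * Vᴴ) ∧
    (((1 : ℂ) / 2) • (S * Sᴴ)).toBlocks₁₂ = ((1 : ℂ) / 2) • (V * sinhTwoR * Vᵀ) :=
  pdc_output_covariance_general n V W hW R hRc hRs M Q S hM hQ hS coshTwoR sinhTwoR hcosh hsinh
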